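/- Let d ≥ 2 be an integer and k0 > 0. There exists a constant C > 0 such that for every Schwartz function φ ∈ 𝓢(ℝ^d, ℂ), the function r ↦ φ(r)/κ(r̃) is integrable on ℝ^d, where r̃ = (r₁, …, r_{d−1}), and |∫_{ℝ^d} φ(r)/κ(r̃) dr| ≤ C · sup_{r ∈ ℝ^d} (1 + |r|²)^d · |φ(r)|. In particular, φ ↦ ∫_{ℝ^d} φ(r)/κ(r̃) dr is a tempered distribution on ℝ^d. -/

import Mathlib

open MeasureTheory Set Metric
open scoped ENNReal NNReal

noncomputable section

/-- The function `κ(x) = √(k0² - |x|²)` for `|x| ≤ k0` and `κ(x) = i√(|x|² - k0²)`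
for `|x| > k0`. -/
def kappa (k0 : ℝ) {m : ℕ} (x : EuclideanSpace ℝ (Fin m)) : ℂ :=
  if ‖x‖ ≤ k0 then (Real.sqrt (k0 ^ 2 - ‖x‖ ^ 2) : ℂ)
  else Complex.I * (Real.sqrt (‖x‖ ^ 2 - k0 ^ 2) : ℂ)

/-- The vector of the first `d - 1` coordinates of `r ∈ ℝ^d`. -/
def tilde {d : ℕ} (r : EuclideanSpace ℝ (Fin d)) : EuclideanSpace ℝ (Fin (d - 1)) :=
  (EuclideanSpace.equiv (Fin (d - 1)) ℝ).symm fun i => r (Fin.castLE (Nat.sub_le d 1) i)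

lemma abs_kappa {k0 : ℝ} (hk0 : 0 ≤ k0) {m : ℕ} (x : EuclideanSpace ℝ (Fin m)) :
    ‖kappa k0 x‖ = Real.sqrt |k0 ^ 2 - ‖x‖ ^ 2| := by
  unfold kappa
  split_ifs with h
  · have h2 : (0:ℝ) ≤ k0 ^ 2 - ‖x‖ ^ 2 := by nlinarith [norm_nonneg x, hk0]
    rw [Complex.norm_real, Real.norm_eq_abs, abs_of_nonneg (Real.sqrt_nonneg _), abs_of_nonneg h2]
  · push_neg at h
    have h2 : (0:ℝ) ≤ ‖x‖ ^ 2 - k0 ^ 2 := by nlinarith [norm_nonneg x, hk0]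
    rw [norm_mul, Complex.norm_I, one_mul, Complex.norm_real, Real.norm_eq_abs,
      abs_of_nonneg (Real.sqrt_nonneg _), abs_sub_comm, abs_of_nonneg h2]

/-- Transfer integrability of `y^(n-1) f y` on `(0,∞)` to integrability of `f ∘ norm` on
`EuclideanSpace ℝ (Fin n)`. -/
lemma integrable_comp_norm {n : ℕ} (hn : 1 ≤ n) {f : ℝ → ℝ} (hf : Measurable f)
    (h : IntegrableOn (fun y => y ^ (n - 1) * f y) (Set.Ioi (0:ℝ))) :
    Integrable (fun x : EuclideanSpace ℝ (Fin n) => f ‖x‖) := by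
  have hnt : Nontrivial (EuclideanSpace ℝ (Fin n)) :=
    Module.nontrivial_of_finrank_pos (R := ℝ) (by rw [finrank_euclideanSpace_fin]; omega)
  set E := EuclideanSpace ℝ (Fin n)
  set μ : Measure E := volume
  have hdim : Module.finrank ℝ E = n := finrank_euclideanSpace_fin
  refine ⟨(hf.comp continuous_norm.measurable).aestronglyMeasurable, ?_⟩
  unfold HasFiniteIntegral
  set g : ℝ → ℝ≥0∞ := fun s => (‖f s‖₊ : ℝ≥0∞) with hg
  have hgm : Measurable g := hf.nnnorm.coe_nnreal_ennreal
  have step1 : ∫⁻ x, ‖f ‖x‖‖₊ ∂μ = ∫⁻ x : ({0}ᶜ : Set E), g ‖x.1‖ ∂(μ.comap Subtype.val) := by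
    rw [lintegral_subtype_comap (measurableSet_singleton (0:E)).compl (fun x => g ‖x‖),
      MeasureTheory.restrict_compl_singleton]
  have step2 : ∫⁻ x : ({0}ᶜ : Set E), g ‖x.1‖ ∂(μ.comap Subtype.val)
      = ∫⁻ p : sphere (0:E) 1 × Ioi (0:ℝ), g p.2.1
        ∂(μ.toSphere.prod (Measure.volumeIoiPow (Module.finrank ℝ E - 1))) := by
    refine Eq.trans ?_ ((μ.measurePreserving_homeomorphUnitSphereProd).lintegral_comp
      ((hgm.comp measurable_subtype_coe).comp measurable_snd))
    congr 1; funext x; simp [homeomorphUnitSphereProd, homeomorphSphereProd]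
  have step3 : ∫⁻ p : sphere (0:E) 1 × Ioi (0:ℝ), g p.2.1
        ∂(μ.toSphere.prod (Measure.volumeIoiPow (Module.finrank ℝ E - 1)))
      = μ.toSphere univ * ∫⁻ y : Ioi (0:ℝ), g y.1 ∂(Measure.volumeIoiPow (n - 1)) := by
    rw [hdim, lintegral_prod (fun p : sphere (0:E) 1 × Ioi (0:ℝ) => g p.2.1)
      (((hgm.comp measurable_subtype_coe).comp measurable_snd).aemeasurable)]
    simp [lintegral_const, mul_comm]
  have step4 : ∫⁻ y : Ioi (0:ℝ), g y.1 ∂(Measure.volumeIoiPow (n - 1))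
      = ∫⁻ y in Ioi (0:ℝ), ENNReal.ofReal (y ^ (n-1)) * g y ∂volume := by
    have s4a := lintegral_withDensity_eq_lintegral_mul
      (Measure.comap Subtype.val volume : Measure (Ioi (0:ℝ)))
      (f := fun r : Ioi (0:ℝ) => ENNReal.ofReal (r.1 ^ (n-1)))
      ((measurable_subtype_coe.pow_const _).ennreal_ofReal)
      (g := fun y : Ioi (0:ℝ) => g y.1) (hgm.comp measurable_subtype_coe)
    rw [Measure.volumeIoiPow, s4a]
    exact lintegral_subtype_comap measurableSet_Ioi
      (fun y : ℝ => ENNReal.ofReal (y ^ (n-1)) * g y)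
  change ∫⁻ x, (‖f ‖x‖‖₊ : ℝ≥0∞) ∂μ < ⊤
  rw [step1, step2, step3, step4]
  have step5 : ∫⁻ y in Ioi (0:ℝ), ENNReal.ofReal (y ^ (n-1)) * g y ∂volume
      = ∫⁻ y in Ioi (0:ℝ), ‖y ^ (n-1) * f y‖₊ ∂volume := by
    refine setLIntegral_congr_fun measurableSet_Ioi (fun y hy => ?_)
    have hynn : (0:ℝ) ≤ y ^ (n-1) := pow_nonneg (le_of_lt hy) _
    rw [← Real.enorm_eq_ofReal hynn, hg]
    simp only [enorm_eq_nnnorm, ← ENNReal.coe_mul, ← nnnorm_mul]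
  rw [step5]
  exact ENNReal.mul_lt_top (measure_lt_top _ _) h.2
lemma rpow_abs_split (k0 : ℝ) (y : ℝ) :
    |y - k0| ^ (-(2:ℝ)⁻¹) = (y - k0) ^ (-(2:ℝ)⁻¹) + (k0 - y) ^ (-(2:ℝ)⁻¹) := by
  have hcos : Real.cos (-(2:ℝ)⁻¹ * Real.pi) = 0 := by
    rw [neg_mul, Real.cos_neg]
    rw [show (2:ℝ)⁻¹ * Real.pi = Real.pi / 2 by ring, Real.cos_pi_div_two]
  rcases lt_trichotomy y k0 with h | h | h
  · rw [Real.rpow_def_of_neg (by linarith : y - k0 < 0), hcos, mul_zero, zero_add,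
      abs_of_neg (by linarith : y - k0 < 0), neg_sub]
  · simp [h, Real.zero_rpow (by norm_num : -(2:ℝ)⁻¹ ≠ 0)]
  · rw [Real.rpow_def_of_neg (by linarith : k0 - y < 0), hcos, mul_zero, add_zero,
      abs_of_pos (by linarith : 0 < y - k0)]

lemma integrableOn_abs_rpow (k0 R : ℝ) (hR : 0 ≤ R) :
    IntegrableOn (fun y : ℝ => |y - k0| ^ (-(2:ℝ)⁻¹)) (Ioc 0 R) := by
  have h1 : IntervalIntegrable (fun x : ℝ => (x - k0) ^ (-(2:ℝ)⁻¹)) volume 0 R := by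
    simpa using (intervalIntegral.intervalIntegrable_rpow' (a := 0 - k0) (b := R - k0)
      (by norm_num : (-1:ℝ) < -(2:ℝ)⁻¹)).comp_sub_right k0
  have h2 : IntervalIntegrable (fun x : ℝ => (k0 - x) ^ (-(2:ℝ)⁻¹)) volume 0 R := by
    simpa using (intervalIntegral.intervalIntegrable_rpow' (a := k0 - 0) (b := k0 - R)
      (by norm_num : (-1:ℝ) < -(2:ℝ)⁻¹)).comp_sub_left k0
  have := (h1.add h2)
  rw [intervalIntegrable_iff_integrableOn_Ioc_of_le hR] at this
  exact this.congr_fun (fun y _ => (rpow_abs_split k0 y).symm) measurableSet_Ioc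

lemma oneDim (n : ℕ) (hn : 1 ≤ n) (k0 : ℝ) (hk0 : 0 < k0) :
    IntegrableOn
      (fun y : ℝ => y ^ (n - 1) * (((1 + y ^ 2) ^ n)⁻¹ * (Real.sqrt |k0 ^ 2 - y ^ 2|)⁻¹))
      (Ioi (0:ℝ)) := by
  set F := fun y : ℝ => y ^ (n - 1) * (((1 + y ^ 2) ^ n)⁻¹ * (Real.sqrt |k0 ^ 2 - y ^ 2|)⁻¹)
    with hF
  have hFm : Measurable F := by
    apply ((measurable_id.pow_const _).mul ?_)
    exact ((measurable_id.pow_const 2).const_add 1 |>.pow_const n).inv.mul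
      (((measurable_const.sub (measurable_id.pow_const 2)).abs.sqrt).inv)
  set R := max 1 (2 * k0) with hRdef
  have hR1 : (1:ℝ) ≤ R := le_max_left _ _
  have hRk : 2 * k0 ≤ R := le_max_right _ _
  have hR0 : (0:ℝ) < R := by linarith
  have hsplit : Ioc (0:ℝ) R ∪ Ioi R = Ioi 0 := Ioc_union_Ioi_eq_Ioi (le_of_lt hR0)
  rw [← hsplit]
  apply IntegrableOn.union
  · -- near part
    have hbd : IntegrableOn
        (fun y : ℝ => R ^ (n-1) * (Real.sqrt k0)⁻¹ * |y - k0| ^ (-(2:ℝ)⁻¹)) (Ioc 0 R) :=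
      (integrableOn_abs_rpow k0 R (le_of_lt hR0)).const_mul _
    refine Integrable.mono' hbd hFm.aestronglyMeasurable ?_
    filter_upwards [ae_restrict_mem measurableSet_Ioc] with y hy
    obtain ⟨hy0, hyR⟩ := hy
    have h1 : y ^ (n-1) ≤ R ^ (n-1) := pow_le_pow_left₀ (le_of_lt hy0) hyR _
    have h2 : ((1 + y ^ 2) ^ n)⁻¹ ≤ 1 := by
      rw [inv_le_one_iff₀]
      right
      exact one_le_pow₀ (by nlinarith)
    have h3 : (Real.sqrt |k0 ^ 2 - y ^ 2|)⁻¹ ≤ (Real.sqrt k0)⁻¹ * |y - k0| ^ (-(2:ℝ)⁻¹) := by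
      have key : Real.sqrt k0 * Real.sqrt |y - k0| ≤ Real.sqrt |k0 ^ 2 - y ^ 2| := by
        rw [← Real.sqrt_mul (le_of_lt hk0)]
        apply Real.sqrt_le_sqrt
        rcases le_or_gt y k0 with h | h
        · rw [abs_of_nonpos (by linarith), abs_of_nonneg (by nlinarith), neg_sub]
          nlinarith
        · rw [abs_of_pos (by linarith), abs_of_nonpos (by nlinarith)]
          nlinarith
      have hrw : (Real.sqrt k0)⁻¹ * |y - k0| ^ (-(2:ℝ)⁻¹)
          = (Real.sqrt k0 * Real.sqrt |y - k0|)⁻¹ := by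
        rw [mul_inv]
        congr 1
        rw [Real.sqrt_eq_rpow, ← Real.rpow_neg (abs_nonneg _)]
        norm_num
      rw [hrw]
      rcases eq_or_ne y k0 with h | h
      · simp [h]
      · apply inv_anti₀ _ key
        have : (0:ℝ) < |y - k0| := abs_pos.mpr (sub_ne_zero.mpr h)
        positivity
    have hnn : 0 ≤ F y := by
      apply mul_nonneg (by positivity)
      apply mul_nonneg (by positivity) (by positivity)
    rw [Real.norm_eq_abs, abs_of_nonneg hnn, hF]
    calc y ^ (n-1) * (((1 + y ^ 2) ^ n)⁻¹ * (Real.sqrt |k0 ^ 2 - y ^ 2|)⁻¹)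
        ≤ R ^ (n-1) * (1 * ((Real.sqrt k0)⁻¹ * |y - k0| ^ (-(2:ℝ)⁻¹))) := by
          apply mul_le_mul h1 _ (by positivity) (by positivity)
          apply mul_le_mul h2 h3 (by positivity) (by norm_num)
      _ = R ^ (n-1) * (Real.sqrt k0)⁻¹ * |y - k0| ^ (-(2:ℝ)⁻¹) := by ring
  · -- far part
    have hbd : IntegrableOn (fun y : ℝ => 2 * ((y ^ 2)⁻¹ : ℝ)) (Ioi R) := by
      apply Integrable.const_mul
      apply ((integrableOn_Ioi_rpow_of_lt (by norm_num : (-2:ℝ) < -1) hR0).congr_fun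
        (fun y hy => ?_) measurableSet_Ioi)
      have hy0 : (0:ℝ) < y := lt_trans hR0 hy
      rw [Real.rpow_neg (le_of_lt hy0), ← Real.rpow_natCast y 2]
      norm_num
    refine Integrable.mono' hbd hFm.aestronglyMeasurable ?_
    filter_upwards [ae_restrict_mem measurableSet_Ioi] with y hy
    have hy1 : (1:ℝ) < y := lt_of_le_of_lt hR1 hy
    have hyk : 2 * k0 < y := lt_of_le_of_lt hRk hy
    have hy0 : (0:ℝ) < y := by linarith
    have h1 : y ^ (n-1) * ((1 + y ^ 2) ^ n)⁻¹ ≤ (y ^ 2)⁻¹ := by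
      rw [mul_inv_le_iff₀ (by positivity), le_inv_mul_iff₀ (by positivity)]
      have e1 : y ^ (2:ℕ) * y ^ (n-1) ≤ y ^ (n+1) := by
        rw [← pow_add]
        apply pow_le_pow_right₀ (le_of_lt hy1)
        omega
      have e2 : y ^ (n+1) ≤ (1 + y ^ 2) ^ n := by
        calc y ^ (n+1) ≤ y ^ (2*n) := pow_le_pow_right₀ (le_of_lt hy1) (by omega)
          _ = (y ^ 2) ^ n := by rw [pow_mul]
          _ ≤ (1 + y ^ 2) ^ n := pow_le_pow_left₀ (by positivity) (by linarith) n
      calc (y:ℝ) ^ 2 * y ^ (n-1) ≤ y ^ (n+1) := e1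
        _ ≤ (1 + y ^ 2) ^ n := e2
    have h2 : (Real.sqrt |k0 ^ 2 - y ^ 2|)⁻¹ ≤ 2 := by
      have habs : |k0 ^ 2 - y ^ 2| = y ^ 2 - k0 ^ 2 := by
        rw [abs_of_nonpos (by nlinarith)]
        ring
      rw [habs]
      have hhalf : (1:ℝ)/2 ≤ Real.sqrt (y ^ 2 - k0 ^ 2) := by
        rw [Real.le_sqrt' (by norm_num)]
        nlinarith
      calc (Real.sqrt (y ^ 2 - k0 ^ 2))⁻¹ ≤ ((1:ℝ)/2)⁻¹ :=
            inv_anti₀ (by norm_num) hhalf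
        _ = 2 := by norm_num
    have hnn : 0 ≤ F y := by
      apply mul_nonneg (by positivity)
      apply mul_nonneg (by positivity) (by positivity)
    rw [Real.norm_eq_abs, abs_of_nonneg hnn, hF]
    calc y ^ (n-1) * (((1 + y ^ 2) ^ n)⁻¹ * (Real.sqrt |k0 ^ 2 - y ^ 2|)⁻¹)
        = (y ^ (n-1) * ((1 + y ^ 2) ^ n)⁻¹) * (Real.sqrt |k0 ^ 2 - y ^ 2|)⁻¹ := by ring
      _ ≤ (y ^ 2)⁻¹ * 2 := by
          apply mul_le_mul h1 h2 (by positivity) (by positivity)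
      _ = 2 * (y ^ 2)⁻¹ := by ring

lemma integrable_core (n : ℕ) (hn : 1 ≤ n) (k0 : ℝ) (hk0 : 0 < k0) :
    Integrable (fun x : EuclideanSpace ℝ (Fin n) =>
      ((1 + ‖x‖ ^ 2) ^ n)⁻¹ * ‖kappa k0 x‖⁻¹) := by
  have heq : (fun x : EuclideanSpace ℝ (Fin n) =>
      ((1 + ‖x‖ ^ 2) ^ n)⁻¹ * ‖kappa k0 x‖⁻¹)
      = fun x => (fun s : ℝ => ((1 + s ^ 2) ^ n)⁻¹ * (Real.sqrt |k0 ^ 2 - s ^ 2|)⁻¹) ‖x‖ := by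
    funext x
    rw [abs_kappa (le_of_lt hk0)]
  rw [heq]
  exact integrable_comp_norm hn
    (f := fun s : ℝ => ((1 + s ^ 2) ^ n)⁻¹ * (Real.sqrt |k0 ^ 2 - s ^ 2|)⁻¹)
    (((measurable_id.pow_const 2).const_add 1 |>.pow_const n).inv.mul
      (((measurable_const.sub (measurable_id.pow_const 2)).abs.sqrt).inv))
    (oneDim n hn k0 hk0)

lemma integrable_prod_core (n : ℕ) (hn : 1 ≤ n) (k0 : ℝ) (hk0 : 0 < k0) :
    Integrable (fun r : EuclideanSpace ℝ (Fin (n+1)) =>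
      (1 + (r (Fin.last n)) ^ 2)⁻¹ *
        (((1 + ‖tilde r‖ ^ 2) ^ n)⁻¹ * ‖kappa k0 (tilde r)‖⁻¹)) := by
  set G : EuclideanSpace ℝ (Fin n) → ℝ := fun x =>
    ((1 + ‖x‖ ^ 2) ^ n)⁻¹ * ‖kappa k0 x‖⁻¹ with hG
  have hGint : Integrable G := integrable_core n hn k0 hk0
  -- G composed with the equiv from (Fin n → ℝ)
  have hG'int : Integrable (fun y : Fin n → ℝ =>
      G ((MeasurableEquiv.toLp 2 (Fin n → ℝ)).symm.symm y)) := by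
    exact (((EuclideanSpace.volume_preserving_symm_measurableEquiv_toLp (Fin n)).symm
      _).integrable_comp_emb (MeasurableEquiv.measurableEmbedding _)).mpr hGint
  have hprod : Integrable (fun p : ℝ × (Fin n → ℝ) =>
      (1 + p.1 ^ 2)⁻¹ * G ((MeasurableEquiv.toLp 2 (Fin n → ℝ)).symm.symm p.2)) := by
    rw [Measure.volume_eq_prod]
    exact integrable_inv_one_add_sq.mul_prod hG'int
  -- transfer back through the two measure preserving equivalences
  have hmp : MeasurePreserving
      ((MeasurableEquiv.piFinSuccAbove (fun _ : Fin (n+1) => ℝ) (Fin.last n)) ∘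
        (MeasurableEquiv.toLp 2 (Fin (n+1) → ℝ)).symm)
      (volume : Measure (EuclideanSpace ℝ (Fin (n+1)))) volume :=
    (volume_preserving_piFinSuccAbove (fun _ : Fin (n+1) => ℝ) (Fin.last n)).comp
      (EuclideanSpace.volume_preserving_symm_measurableEquiv_toLp (Fin (n+1)))
  have := (hmp.integrable_comp_emb
    ((MeasurableEquiv.measurableEmbedding _).comp
      (MeasurableEquiv.measurableEmbedding _))).mpr hprod
  have hfun : ((fun p : ℝ × (Fin n → ℝ) =>
      (1 + p.1 ^ 2)⁻¹ * G ((MeasurableEquiv.toLp 2 (Fin n → ℝ)).symm.symm p.2)) ∘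
      ((MeasurableEquiv.piFinSuccAbove (fun _ : Fin (n+1) => ℝ) (Fin.last n)) ∘
        (MeasurableEquiv.toLp 2 (Fin (n+1) → ℝ)).symm))
      = fun r : EuclideanSpace ℝ (Fin (n+1)) =>
        (1 + (r (Fin.last n)) ^ 2)⁻¹ *
          (((1 + ‖tilde r‖ ^ 2) ^ n)⁻¹ * ‖kappa k0 (tilde r)‖⁻¹) := by
    funext r
    simp only [Function.comp_apply, hG]
    congr 2
    all_goals {
      have harg : ((MeasurableEquiv.toLp 2 (Fin n → ℝ)).symm.symm
          ((MeasurableEquiv.piFinSuccAbove (fun _ : Fin (n+1) => ℝ) (Fin.last n))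
            ((MeasurableEquiv.toLp 2 (Fin (n+1) → ℝ)).symm r)).2) = tilde r := by
        ext i
        show r ((Fin.last n).succAbove i) = r (Fin.castLE (Nat.sub_le (n+1) 1) i)
        rw [show (Fin.last n).succAbove i = Fin.castLE (Nat.sub_le (n+1) 1) i by
          ext
          simp [Fin.succAbove_last]]
      rw [harg]
    }
  rwa [hfun] at this
lemma measurable_kappa (k0 : ℝ) {m : ℕ} : Measurable (kappa k0 (m := m)) := by
  unfold kappa
  apply Measurable.ite (measurableSet_le continuous_norm.measurable measurable_const)
  · exact (Complex.continuous_ofReal.comp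
      ((continuous_const.sub (continuous_norm.pow 2)).sqrt)).measurable
  · exact (continuous_const.mul (Complex.continuous_ofReal.comp
      (((continuous_norm.pow 2).sub continuous_const).sqrt))).measurable

lemma measurable_tilde {d : ℕ} : Measurable (tilde (d := d)) :=
  (WithLp.measurable_toLp 2 _).comp (measurable_pi_lambda _
    (fun i => (measurable_pi_apply _).comp (WithLp.measurable_ofLp 2 _)))

/-- `φ ↦ ∫ φ(r)/κ(r̃) dr` is a tempered distribution: the integral converges absolutely for
every Schwartz function `φ` and is bounded by a fixed Schwartz seminorm of `φ`. -/
theorem kappa_inv_tempered (d : ℕ) (hd : 2 ≤ d) (k0 : ℝ) (hk0 : 0 < k0) :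
    ∃ C > (0 : ℝ), ∀ φ : SchwartzMap (EuclideanSpace ℝ (Fin d)) ℂ,
      Integrable (fun r : EuclideanSpace ℝ (Fin d) => φ r / kappa k0 (tilde r)) ∧
      ‖∫ r : EuclideanSpace ℝ (Fin d), φ r / kappa k0 (tilde r)‖ ≤
        C * ⨆ r : EuclideanSpace ℝ (Fin d), (1 + ‖r‖ ^ 2) ^ d * ‖φ r‖ := by
  obtain ⟨n, rfl⟩ : ∃ n, d = n + 1 := ⟨d - 1, by omega⟩
  have hn : 1 ≤ n := by omega
  set core : EuclideanSpace ℝ (Fin (n+1)) → ℝ := fun r =>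
    (1 + (r (Fin.last n)) ^ 2)⁻¹ *
      (((1 + ‖tilde r‖ ^ 2) ^ n)⁻¹ * ‖kappa k0 (tilde r)‖⁻¹) with hcore
  have hcoreint : Integrable core := integrable_prod_core n hn k0 hk0
  have hcorenn : ∀ r, 0 ≤ core r := fun r => by
    apply mul_nonneg (by positivity)
    apply mul_nonneg (by positivity) (by positivity)
  set I : ℝ := ∫ r, core r with hI
  have hInn : 0 ≤ I := integral_nonneg hcorenn
  refine ⟨I + 1, by linarith, fun φ => ?_⟩
  -- the seminorm-type supremum
  set N : ℝ := ⨆ r : EuclideanSpace ℝ (Fin (n+1)), (1 + ‖r‖ ^ 2) ^ (n+1) * ‖φ r‖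
    with hN
  have hNbdd : BddAbove (Set.range fun r : EuclideanSpace ℝ (Fin (n+1)) =>
      (1 + ‖r‖ ^ 2) ^ (n+1) * ‖φ r‖) := by
    refine ⟨2 ^ (2*(n+1)) * (Finset.Iic (2*(n+1), 0)).sup
      (fun m => SchwartzMap.seminorm ℝ m.1 m.2) φ, ?_⟩
    rintro - ⟨r, rfl⟩
    have key := SchwartzMap.one_add_le_sup_seminorm_apply (𝕜 := ℝ) (m := (2*(n+1), 0))
      le_rfl le_rfl φ r
    rw [norm_iteratedFDeriv_zero] at key
    refine le_trans ?_ key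
    show (1 + ‖r‖ ^ 2) ^ (n+1) * ‖φ r‖ ≤ _
    apply mul_le_mul_of_nonneg_right _ (norm_nonneg _)
    calc (1 + ‖r‖ ^ 2) ^ (n+1) ≤ ((1 + ‖r‖) ^ 2) ^ (n+1) := by
          apply pow_le_pow_left₀ (by positivity)
          nlinarith [norm_nonneg r]
      _ = (1 + ‖r‖) ^ (2*(n+1)) := by rw [← pow_mul]
  have hNle : ∀ r, (1 + ‖r‖ ^ 2) ^ (n+1) * ‖φ r‖ ≤ N :=
    fun r => le_ciSup hNbdd r
  have hNnn : 0 ≤ N := Real.iSup_nonneg (fun r => by positivity)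
  -- pointwise bound
  have hpt : ∀ r : EuclideanSpace ℝ (Fin (n+1)),
      ‖φ r / kappa k0 (tilde r)‖ ≤ N * core r := by
    intro r
    have hsum : ‖r‖ ^ 2 = ∑ i, (r i) ^ 2 := by
      rw [EuclideanSpace.norm_eq, Real.sq_sqrt (by positivity)]
      simp [Real.norm_eq_abs, sq_abs]
    have hsumt : ‖tilde r‖ ^ 2 = ∑ i : Fin n, (r (Fin.castLE (Nat.sub_le (n+1) 1) i)) ^ 2 := by
      rw [EuclideanSpace.norm_eq, Real.sq_sqrt (by positivity)]
      simp only [Real.norm_eq_abs, sq_abs]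
      rfl
    have hdecomp : ∑ i, (r i) ^ 2
        = ∑ i : Fin n, (r (Fin.castLE (Nat.sub_le (n+1) 1) i)) ^ 2 + (r (Fin.last n)) ^ 2 := by
      rw [Fin.sum_univ_castSucc (f := fun i => (r i) ^ 2)]
      congr 1
    have h1 : ‖tilde r‖ ^ 2 ≤ ‖r‖ ^ 2 := by
      rw [hsum, hsumt, hdecomp]
      exact le_add_of_nonneg_right (sq_nonneg _)
    have h2 : (r (Fin.last n)) ^ 2 ≤ ‖r‖ ^ 2 := by
      rw [hsum, hdecomp]
      exact le_add_of_nonneg_left (Finset.sum_nonneg fun i _ => sq_nonneg _)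
    have hkey : (1 + ‖tilde r‖ ^ 2) ^ n * (1 + (r (Fin.last n)) ^ 2)
        ≤ (1 + ‖r‖ ^ 2) ^ (n+1) := by
      calc (1 + ‖tilde r‖ ^ 2) ^ n * (1 + (r (Fin.last n)) ^ 2)
          ≤ (1 + ‖r‖ ^ 2) ^ n * (1 + ‖r‖ ^ 2) := by
            apply mul_le_mul (pow_le_pow_left₀ (by positivity) (by linarith) n)
              (by linarith) (by positivity) (by positivity)
        _ = (1 + ‖r‖ ^ 2) ^ (n+1) := (pow_succ _ n).symm
    have hphi : ‖φ r‖ ≤ N * ((1 + ‖r‖ ^ 2) ^ (n+1))⁻¹ := by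
      rw [le_mul_inv_iff₀ (by positivity), mul_comm]
      exact hNle r
    have hinv : ((1 + ‖r‖ ^ 2) ^ (n+1))⁻¹
        ≤ ((1 + ‖tilde r‖ ^ 2) ^ n * (1 + (r (Fin.last n)) ^ 2))⁻¹ := by
      apply inv_anti₀ (by positivity) hkey
    rw [norm_div]
    calc ‖φ r‖ / ‖kappa k0 (tilde r)‖
        = ‖φ r‖ * ‖kappa k0 (tilde r)‖⁻¹ := div_eq_mul_inv _ _
      _ ≤ (N * ((1 + ‖r‖ ^ 2) ^ (n+1))⁻¹) * ‖kappa k0 (tilde r)‖⁻¹ := by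
          apply mul_le_mul_of_nonneg_right hphi (by positivity)
      _ ≤ (N * ((1 + ‖tilde r‖ ^ 2) ^ n * (1 + (r (Fin.last n)) ^ 2))⁻¹)
            * ‖kappa k0 (tilde r)‖⁻¹ := by
          apply mul_le_mul_of_nonneg_right _ (by positivity)
          exact mul_le_mul_of_nonneg_left hinv hNnn
      _ = N * core r := by
          rw [hcore]
          rw [mul_inv]
          ring
  have hmeas : AEStronglyMeasurable
      (fun r : EuclideanSpace ℝ (Fin (n+1)) => φ r / kappa k0 (tilde r)) volume := by
    exact (φ.continuous.measurable.div
      ((measurable_kappa k0).comp measurable_tilde)).aestronglyMeasurable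
  have hBint : Integrable (fun r => N * core r) := hcoreint.const_mul N
  have hint : Integrable (fun r : EuclideanSpace ℝ (Fin (n+1)) => φ r / kappa k0 (tilde r)) :=
    Integrable.mono' hBint hmeas (Filter.Eventually.of_forall hpt)
  refine ⟨hint, ?_⟩
  calc ‖∫ r : EuclideanSpace ℝ (Fin (n+1)), φ r / kappa k0 (tilde r)‖
      ≤ ∫ r : EuclideanSpace ℝ (Fin (n+1)), ‖φ r / kappa k0 (tilde r)‖ :=
        norm_integral_le_integral_norm _
    _ ≤ ∫ r, N * core r := integral_mono hint.norm hBint hpt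
    _ = N * I := by rw [integral_const_mul]
    _ ≤ N * (I + 1) := by
        apply mul_le_mul_of_nonneg_left (by linarith) hNnn
    _ = (I + 1) * N := mul_comm _ _

end
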